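/- arXiv:2108.10094 — 4 statements merged into one kernel-verified Lean document; each statement's English description precedes it below -/
import Mathlib

section
/- The numerical range of a sesquilinear form h on a complex inner product space, defined as the set of values h[ψ,ψ] over unit vectors ψ in the domain of h, is a convex subset of ℂ. -/
/-! Toeplitz–Hausdorff. Let `ψ, φ` be unit vectors with `g ψ ψ = a ≠ b = g φ φ`. The form
`(a - b)⁻¹ • (g - b • ⟪·,·⟫)` has the numerical range of `g` transported by an affine map of
`𝕜` and takes the values `1` at `ψ` and `0` at `φ`; multiplying `φ` by a phase makes the cross
term `g ψ φ + g φ ψ` real. Along the path `s • ψ + (1 - s) • φ` the form is then the real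
polynomial `s² + s (1 - s) r` (this formula, not `g`, which need not be bounded, gives
continuity), so after normalising the path to unit vectors the values run continuously from
`0` to `1`, and the intermediate value theorem covers `[0, 1]`. -/

open RCLike ComplexConjugate

theorem RCLike.exists_norm_eq_one_mul_eq_norm {𝕜 : Type*} [RCLike 𝕜] (w : 𝕜) :
    ∃ u : 𝕜, ‖u‖ = 1 ∧ u * w = ‖w‖ := by
  rcases eq_or_ne w 0 with rfl | hw
  · exact ⟨1, norm_one, by simp⟩
  · refine ⟨conj w / ‖w‖, by simp [norm_div, hw], ?_⟩
    rw [div_mul_eq_mul_div, RCLike.conj_mul]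
    field_simp [ofReal_ne_zero.2 (norm_ne_zero_iff.2 hw)]

section

variable {𝕜 H : Type*} [RCLike 𝕜] [NormedAddCommGroup H] [InnerProductSpace 𝕜 H]
  (K : Submodule 𝕜 H) (g : H →ₗ⋆[𝕜] H →ₗ[𝕜] 𝕜)

def numericalRange : Set 𝕜 := {z : 𝕜 | ∃ ψ : H, ψ ∈ K ∧ ‖ψ‖ = 1 ∧ g ψ ψ = z}

theorem div_norm_sq_mem_numericalRange {v : H} (hvK : v ∈ K) (hv : v ≠ 0) :
    g v v / (‖v‖ : 𝕜) ^ 2 ∈ numericalRange K g := by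
  refine ⟨(‖v‖⁻¹ : 𝕜) • v, K.smul_mem _ hvK, norm_smul_inv_norm hv, ?_⟩
  simp only [LinearMap.map_smulₛₗ, LinearMap.smul_apply, map_smul, smul_eq_mul, map_inv₀,
    conj_ofReal]
  ring

theorem smul_sub_innerₛₗ_apply_self (c b : 𝕜) {χ : H} (hχ : ‖χ‖ = 1) :
    (c • (g - b • innerₛₗ 𝕜) : H →ₗ⋆[𝕜] H →ₗ[𝕜] 𝕜) χ χ = c * (g χ χ - b) := by
  simp [inner_self_eq_norm_sq_to_K, hχ]

theorem numericalRange_smul_sub_innerₛₗ (c b : 𝕜) :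
    numericalRange K (c • (g - b • innerₛₗ 𝕜) : H →ₗ⋆[𝕜] H →ₗ[𝕜] 𝕜) =
      (fun z ↦ c * (z - b)) '' numericalRange K g := by
  ext z
  constructor
  · rintro ⟨χ, hχK, hχ, rfl⟩
    exact ⟨g χ χ, ⟨χ, hχK, hχ, rfl⟩, (smul_sub_innerₛₗ_apply_self g c b hχ).symm⟩
  · rintro ⟨_, ⟨χ, hχK, hχ, rfl⟩, rfl⟩
    exact ⟨χ, hχK, hχ, smul_sub_innerₛₗ_apply_self g c b hχ⟩

theorem exists_norm_eq_one_im_apply_add_apply_eq_zero (ψ φ : H) :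
    ∃ u : 𝕜, ‖u‖ = 1 ∧ im (g ψ (u • φ) + g (u • φ) ψ) = 0 := by
  obtain ⟨u, hu, hw⟩ := RCLike.exists_norm_eq_one_mul_eq_norm (g ψ φ - conj (g φ ψ))
  refine ⟨u, hu, ?_⟩
  have : g ψ (u • φ) + g (u • φ) ψ
      = u * (g ψ φ - conj (g φ ψ)) + (conj u * g φ ψ + conj (conj u * g φ ψ)) := by
    simp only [map_smul, LinearMap.map_smulₛₗ, LinearMap.smul_apply, smul_eq_mul, map_mul,
      conj_conj]
    ring
  rw [this, hw, add_conj]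
  simp

theorem ofReal_mem_numericalRange {ψ φ : H} (hψK : ψ ∈ K) (hφK : φ ∈ K) (hψ : ‖ψ‖ = 1)
    (hφ : ‖φ‖ = 1) (hgψ : g ψ ψ = 1) (hgφ : g φ φ = 0) (hcross : im (g ψ φ + g φ ψ) = 0)
    {t : ℝ} (ht : t ∈ Set.Icc (0 : ℝ) 1) : (t : 𝕜) ∈ numericalRange K g := by
  set r := re (g ψ φ + g φ ψ)
  set v : ℝ → H := fun s ↦ (s : 𝕜) • ψ + ((1 - s : ℝ) : 𝕜) • φ
  have hgv : ∀ s, g (v s) (v s) = ((s ^ 2 + s * (1 - s) * r : ℝ) : 𝕜) := by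
    intro s
    have hr : g ψ φ + g φ ψ = (r : 𝕜) := RCLike.ext (by simp [r]) (by simp [hcross])
    simp only [v, map_add, map_smulₛₗ, LinearMap.add_apply, LinearMap.smul_apply, smul_eq_mul,
      RingHom.id_apply, conj_ofReal, hgψ, hgφ]
    push_cast
    linear_combination (s : 𝕜) * (1 - s) * hr
  have hv0 : ∀ s, v s ≠ 0 := by
    intro s hs
    have hs0 : s = 0 := by
      -- `s • ψ = -((1 - s) • φ)`, and evaluating `g` on both sides gives `s ^ 2 = 0`.
      have h := congrArg (fun x ↦ g x x) (eq_neg_of_add_eq_zero_left hs)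
      simp only [map_neg, LinearMap.neg_apply, map_smulₛₗ, LinearMap.smul_apply, smul_eq_mul,
        RingHom.id_apply, conj_ofReal, hgψ, hgφ] at h
      have : (s : 𝕜) ^ 2 = 0 := by linear_combination h
      simpa using this
    have : φ = 0 := by simpa [v, hs0] using hs
    simp [this] at hφ
  set F : ℝ → ℝ := fun s ↦ (s ^ 2 + s * (1 - s) * r) / ‖v s‖ ^ 2
  have hF : ContinuousOn F (Set.Icc 0 1) := by
    refine (Continuous.continuousOn (by fun_prop)).div (Continuous.continuousOn (by fun_prop))
      fun s _ ↦ by simpa using hv0 s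
  have hFt : t ∈ Set.Icc (F 0) (F 1) := by simpa [F, v, hψ] using ht
  obtain ⟨s, -, rfl⟩ := intermediate_value_Icc zero_le_one hF hFt
  have := div_norm_sq_mem_numericalRange K g (K.add_mem (K.smul_mem _ hψK) (K.smul_mem _ hφK))
    (hv0 s)
  rwa [hgv, ← ofReal_pow, ← ofReal_div] at this

theorem convex_numericalRange : Convex ℝ (numericalRange K g) := by
  refine convex_iff_segment_subset.2 ?_
  rintro _ ⟨φ, hφK, hφ, rfl⟩ _ ⟨ψ, hψK, hψ, rfl⟩
  rw [segment_eq_image_lineMap]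
  rintro _ ⟨t, ht, rfl⟩
  rcases eq_or_ne (g ψ ψ) (g φ φ) with hab | hab
  · rw [hab, AffineMap.lineMap_same_apply]
    exact ⟨φ, hφK, hφ, rfl⟩
  set g' : H →ₗ⋆[𝕜] H →ₗ[𝕜] 𝕜 := (g ψ ψ - g φ φ)⁻¹ • (g - g φ φ • innerₛₗ 𝕜)
  have hg'ψ : g' ψ ψ = 1 := by
    rw [smul_sub_innerₛₗ_apply_self g _ _ hψ, inv_mul_cancel₀ (sub_ne_zero.2 hab)]
  have hg'φ : g' φ φ = 0 := by rw [smul_sub_innerₛₗ_apply_self g _ _ hφ, sub_self, mul_zero]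
  obtain ⟨u, hu, hcross⟩ := exists_norm_eq_one_im_apply_add_apply_eq_zero g' ψ φ
  have ht' := ofReal_mem_numericalRange K g' hψK (K.smul_mem u hφK) hψ
    (by rw [norm_smul, hu, hφ, one_mul]) hg'ψ
    (by simp only [map_smulₛₗ, LinearMap.smul_apply, smul_eq_mul, hg'φ, mul_zero]) hcross ht
  obtain ⟨z, hz, hzt⟩ := (numericalRange_smul_sub_innerₛₗ K g _ _).le ht'
  have hz' : z = g φ φ + t * (g ψ ψ - g φ φ) := by
    rw [inv_mul_eq_iff_eq_mul₀ (sub_ne_zero.2 hab)] at hzt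
    linear_combination hzt
  rw [AffineMap.lineMap_apply_module, RCLike.real_smul_eq_coe_mul, RCLike.real_smul_eq_coe_mul]
  convert hz using 1
  rw [hz']
  push_cast
  ring

end

/-- The numerical range of a sesquilinear form `h` on a subspace `K` of a
complex Hilbert space — the set of values `h[ψ,ψ]` over unit vectors `ψ ∈ K` — is a convex
subset of `ℂ`. -/
theorem numericalRange_convex {H : Type*} [NormedAddCommGroup H] [InnerProductSpace ℂ H]
    (K : Submodule ℂ H) (h : H →ₗ⋆[ℂ] H →ₗ[ℂ] ℂ) :
    Convex ℝ {z : ℂ | ∃ ψ : H, ψ ∈ K ∧ ‖ψ‖ = 1 ∧ h ψ ψ = z} :=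
  convex_numericalRange K h
end

section
/- For a symmetric operator T on a complex Hilbert space whose numerical range is bounded below, the infimum of the numerical range belongs to the spectrum of T. -/
/-- The resolvent set of a (possibly unbounded) operator `T` defined on the subspace `dom`
of `H`: those `ζ` such that `T - ζ` has a bounded everywhere-defined (two-sided) inverse. -/
def ResolventSet {H : Type*} [NormedAddCommGroup H] [NormedSpace ℂ H]
    (dom : Submodule ℂ H) (T : dom →ₗ[ℂ] H) : Set ℂ :=
  {ζ | ∃ (R : H →L[ℂ] H) (hmem : ∀ y : H, R y ∈ dom),
    (∀ y : H, T ⟨R y, hmem y⟩ - ζ • R y = y) ∧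
    (∀ x : dom, R (T x - ζ • (x : H)) = (x : H))}

/-!
Let `m` be the infimum of the numerical range. Then `⟪x, (T - m) y⟫` is a semi-inner product on
`dom`, so it satisfies the Cauchy–Schwarz inequality. If `R` were a bounded inverse of `T - m`,
then for a unit vector `ψ` and `x = R ψ` we would get
`1 = |⟪x, (T - m) ψ⟫|² ≤ ⟪x, (T - m) x⟫ ⟪ψ, (T - m) ψ⟫ = re ⟪x, ψ⟫ (⟪ψ, T ψ⟫ - m)
  ≤ ‖R‖ (⟪ψ, T ψ⟫ - m)`,
which fails once `⟪ψ, T ψ⟫` is close enough to `m`.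
-/

open ComplexConjugate
open scoped InnerProductSpace

section

variable {H : Type*} [NormedAddCommGroup H] [InnerProductSpace ℂ H] {dom : Submodule ℂ H}
  {T : dom →ₗ[ℂ] H}

theorem ofReal_re_inner_apply_self
    (hsymm : ∀ x y : dom, ⟪(x : H), T y⟫_ℂ = ⟪T x, (y : H)⟫_ℂ) (x : dom) :
    ((⟪(x : H), T x⟫_ℂ).re : ℂ) = ⟪(x : H), T x⟫_ℂ :=
  Complex.conj_eq_iff_re.mp (by rw [inner_conj_symm, hsymm])

theorem re_inner_apply_sub_smul_self (m : ℝ) (x : dom) :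
    (⟪(x : H), T x - (m : ℂ) • (x : H)⟫_ℂ).re = (⟪(x : H), T x⟫_ℂ).re - m * ‖(x : H)‖ ^ 2 := by
  rw [inner_sub_right, inner_smul_right, Complex.sub_re, Complex.re_ofReal_mul]
  exact congrArg _ (congrArg _ (norm_sq_eq_re_inner (𝕜 := ℂ) _).symm)

theorem conj_inner_apply_sub_smul (hsymm : ∀ x y : dom, ⟪(x : H), T y⟫_ℂ = ⟪T x, (y : H)⟫_ℂ)
    (m : ℝ) (x y : dom) :
    conj ⟪(y : H), T x - (m : ℂ) • (x : H)⟫_ℂ = ⟪(x : H), T y - (m : ℂ) • (y : H)⟫_ℂ := by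
  rw [inner_conj_symm, inner_sub_left, inner_sub_right, inner_smul_left, inner_smul_right,
    ← hsymm, Complex.conj_ofReal]

theorem mul_norm_sq_le_re_inner_apply_self {m : ℝ}
    (hm : ∀ ψ : dom, ‖(ψ : H)‖ = 1 → m ≤ (⟪(ψ : H), T ψ⟫_ℂ).re) (x : dom) :
    m * ‖(x : H)‖ ^ 2 ≤ (⟪(x : H), T x⟫_ℂ).re := by
  rcases eq_or_ne (x : H) 0 with hx | hx
  · simp [show x = 0 from Subtype.ext hx]
  have hx₀ : 0 < ‖(x : H)‖ := norm_pos_iff.mpr hx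
  have hψ := hm (((‖(x : H)‖⁻¹ : ℝ) : ℂ) • x) (by simp [norm_smul, hx₀.ne'])
  simp only [map_smul, Submodule.coe_smul, inner_smul_left, inner_smul_right, Complex.conj_ofReal,
    ← mul_assoc, ← Complex.ofReal_mul, Complex.re_ofReal_mul] at hψ
  calc m * ‖(x : H)‖ ^ 2
      ≤ ‖(x : H)‖⁻¹ * ‖(x : H)‖⁻¹ * (⟪(x : H), T x⟫_ℂ).re * ‖(x : H)‖ ^ 2 := by gcongr
    _ = (⟪(x : H), T x⟫_ℂ).re := by field_simp

theorem re_inner_apply_sub_smul_self_nonneg {m : ℝ}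
    (hm : ∀ ψ : dom, ‖(ψ : H)‖ = 1 → m ≤ (⟪(ψ : H), T ψ⟫_ℂ).re) (x : dom) :
    0 ≤ (⟪(x : H), T x - (m : ℂ) • (x : H)⟫_ℂ).re := by
  rw [re_inner_apply_sub_smul_self]
  linarith [mul_norm_sq_le_re_inner_apply_self hm x]

theorem norm_inner_apply_sub_smul_mul_le
    (hsymm : ∀ x y : dom, ⟪(x : H), T y⟫_ℂ = ⟪T x, (y : H)⟫_ℂ) {m : ℝ}
    (hm : ∀ ψ : dom, ‖(ψ : H)‖ = 1 → m ≤ (⟪(ψ : H), T ψ⟫_ℂ).re) (x y : dom) :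
    ‖⟪(x : H), T y - (m : ℂ) • (y : H)⟫_ℂ‖ * ‖⟪(y : H), T x - (m : ℂ) • (x : H)⟫_ℂ‖ ≤
      (⟪(x : H), T x - (m : ℂ) • (x : H)⟫_ℂ).re * (⟪(y : H), T y - (m : ℂ) • (y : H)⟫_ℂ).re := by
  let _ : PreInnerProductSpace.Core ℂ dom :=
    { inner x y := ⟪(x : H), T y - (m : ℂ) • (y : H)⟫_ℂ
      conj_inner_symm := conj_inner_apply_sub_smul hsymm m
      re_inner_nonneg := re_inner_apply_sub_smul_self_nonneg hm
      add_left x y z := by simp only [Submodule.coe_add, inner_add_left]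
      smul_left x y r := by simp only [Submodule.coe_smul, inner_smul_left] }
  exact InnerProductSpace.Core.inner_mul_inner_self_le x y

theorem one_le_opNorm_mul_re_inner_apply_self_sub
    (hsymm : ∀ x y : dom, ⟪(x : H), T y⟫_ℂ = ⟪T x, (y : H)⟫_ℂ) {m : ℝ}
    (hm : ∀ ψ : dom, ‖(ψ : H)‖ = 1 → m ≤ (⟪(ψ : H), T ψ⟫_ℂ).re)
    (R : H →L[ℂ] H) (hmem : ∀ y : H, R y ∈ dom)
    (hR : ∀ y : H, T ⟨R y, hmem y⟩ - (m : ℂ) • R y = y) {ψ : dom} (hψ : ‖(ψ : H)‖ = 1) :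
    1 ≤ ‖R‖ * ((⟪(ψ : H), T ψ⟫_ℂ).re - m) := by
  set x : dom := ⟨R ψ, hmem ψ⟩
  have hψx : ⟪(ψ : H), T x - (m : ℂ) • (x : H)⟫_ℂ = 1 := by
    rw [hR, inner_self_eq_norm_sq_to_K, hψ]
    norm_num
  have hxψ : ⟪(x : H), T ψ - (m : ℂ) • (ψ : H)⟫_ℂ = 1 := by
    rw [← conj_inner_apply_sub_smul hsymm, hψx, map_one]
  have hxx : (⟪(x : H), T x - (m : ℂ) • (x : H)⟫_ℂ).re ≤ ‖R‖ := by
    rw [hR]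
    calc (⟪(x : H), (ψ : H)⟫_ℂ).re ≤ ‖(x : H)‖ * ‖(ψ : H)‖ :=
        re_inner_le_norm (𝕜 := ℂ) (x : H) (ψ : H)
      _ ≤ ‖R‖ := by simpa [hψ] using R.le_opNorm ψ
  have hψψ : (⟪(ψ : H), T ψ - (m : ℂ) • (ψ : H)⟫_ℂ).re = (⟪(ψ : H), T ψ⟫_ℂ).re - m := by
    rw [re_inner_apply_sub_smul_self, hψ, one_pow, mul_one]
  have hcs := norm_inner_apply_sub_smul_mul_le hsymm hm x ψ
  rw [hxψ, hψx, hψψ, norm_one, one_mul] at hcs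
  calc 1 ≤ _ := hcs
    _ ≤ ‖R‖ * ((⟪(ψ : H), T ψ⟫_ℂ).re - m) := by
      gcongr
      linarith [hm ψ hψ]

end

theorem csInf_numericalRange_mem_spectrum_general {H : Type*} [NormedAddCommGroup H]
    [InnerProductSpace ℂ H] (dom : Submodule ℂ H) (T : dom →ₗ[ℂ] H)
    (hsymm : ∀ x y : dom, (inner ℂ ((x : H)) (T y) : ℂ) = inner ℂ (T x) ((y : H)))
    (Num : Set ℝ)
    (hNum : Num = {r : ℝ | ∃ ψ : dom, ‖(ψ : H)‖ = 1 ∧ (inner ℂ ((ψ : H)) (T ψ) : ℂ) = (r : ℂ)})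
    (hne : Num.Nonempty) (hbdd : BddBelow Num) :
    ((sInf Num : ℝ) : ℂ) ∉ ResolventSet dom T := by
  rintro ⟨R, hmem, hR, -⟩
  set m := sInf Num
  have hm : ∀ ψ : dom, ‖(ψ : H)‖ = 1 → m ≤ (⟪(ψ : H), T ψ⟫_ℂ).re := fun ψ hψ =>
    csInf_le hbdd (hNum ▸ ⟨ψ, hψ, (ofReal_re_inner_apply_self hsymm ψ).symm⟩)
  have hε : (0 : ℝ) < (‖R‖ + 1)⁻¹ := by positivity
  obtain ⟨r, hr, hrm⟩ := exists_lt_of_csInf_lt hne (lt_add_of_pos_right m hε)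
  obtain ⟨ψ, hψ, hψr⟩ := hNum ▸ hr
  have key := one_le_opNorm_mul_re_inner_apply_self_sub hsymm hm R hmem hR hψ
  rw [hψr, Complex.ofReal_re] at key
  have hgap : (r - m) * (‖R‖ + 1) < 1 := by
    rwa [← lt_div_iff₀ (by positivity), one_div, sub_lt_iff_lt_add']
  nlinarith [norm_nonneg R]

/-- For a symmetric operator `T` on a complex Hilbert space whose numerical
range is bounded below, the infimum of the numerical range belongs to the spectrum of `T`
(the complement of the resolvent set). -/
theorem csInf_numericalRange_mem_spectrum {H : Type*} [NormedAddCommGroup H]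
    [InnerProductSpace ℂ H] [CompleteSpace H] (dom : Submodule ℂ H) (T : dom →ₗ[ℂ] H)
    (hsymm : ∀ x y : dom, (inner ℂ ((x : H)) (T y) : ℂ) = inner ℂ (T x) ((y : H)))
    (Num : Set ℝ)
    (hNum : Num = {r : ℝ | ∃ ψ : dom, ‖(ψ : H)‖ = 1 ∧ (inner ℂ ((ψ : H)) (T ψ) : ℂ) = (r : ℂ)})
    (hne : Num.Nonempty) (hbdd : BddBelow Num) :
    ((sInf Num : ℝ) : ℂ) ∉ ResolventSet dom T :=
  csInf_numericalRange_mem_spectrum_general dom T hsymm Num hNum hne hbdd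
end

section
/- Let U be an open convex subset of a complex Banach space X, f : U → Y holomorphic into a complex Banach space Y, and M := ⋂_{x∈U} ker Df(x). Then M is a closed subspace of X and f extends uniquely to a holomorphic function on U + M satisfying f(x + m) = f(x) for all x ∈ U, m ∈ M. -/
open Set Topology
open scoped Pointwise

/-! Along a direction `m ∈ M` the derivative of `f` vanishes, so by the mean value theorem on
segments (this is where convexity of `U` enters) `f` is constant on each slice `U ∩ (x + M)`.
Hence `f (x + m) := f x` is well defined on `U + M`, and locally it is a translate of `f`, so it
is holomorphic. For uniqueness, a holomorphic extension `g` restricts on each complex line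
`τ ↦ x + τ • m` to an entire function which is constant near `τ = 0`, hence constant. -/

theorem eq_of_fderiv_apply_sub_eq_zero_on_segment {E F : Type*}
    [NormedAddCommGroup E] [NormedSpace ℝ E] [NormedAddCommGroup F] [NormedSpace ℝ F]
    {f : E → F} {x y : E} (hf : ∀ z ∈ segment ℝ x y, DifferentiableAt ℝ f z)
    (hf' : ∀ z ∈ segment ℝ x y, fderiv ℝ f z (y - x) = 0) : f y = f x := by
  have hline : ∀ t ∈ Icc (0 : ℝ) 1,
      HasDerivWithinAt (fun t : ℝ => f (x + t • (y - x))) 0 (Icc 0 1) t := by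
    intro t ht
    have hz : x + t • (y - x) ∈ segment ℝ x y := segment_eq_image' ℝ x y ▸ ⟨t, ht, rfl⟩
    have hγ : HasDerivAt (fun t : ℝ => x + t • (y - x)) (y - x) t := by
      simpa using ((hasDerivAt_id t).smul_const (y - x)).const_add x
    simpa [Function.comp_def, hf' _ hz] using
      ((hf _ hz).hasFDerivAt.comp_hasDerivAt t hγ).hasDerivWithinAt
  simpa [sub_eq_zero] using
    norm_image_sub_le_of_norm_deriv_le_segment_01' hline (C := 0) fun _ _ => by simp

theorem Convex.apply_eq_of_fderiv_apply_sub_eq_zero {𝕜 E F : Type*}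
    [NontriviallyNormedField 𝕜] [NormedAlgebra ℝ 𝕜]
    [NormedAddCommGroup E] [NormedSpace 𝕜 E] [NormedSpace ℝ E] [IsScalarTower ℝ 𝕜 E]
    [NormedAddCommGroup F] [NormedSpace 𝕜 F] [NormedSpace ℝ F] [IsScalarTower ℝ 𝕜 F]
    {U : Set E} {f : E → F} (hUconv : Convex ℝ U) (hU : IsOpen U) (hf : DifferentiableOn 𝕜 f U)
    {x y : E} (hx : x ∈ U) (hy : y ∈ U) (hxy : ∀ z ∈ U, fderiv 𝕜 f z (y - x) = 0) :
    f y = f x := by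
  have hdiff : ∀ z ∈ U, DifferentiableAt 𝕜 f z := fun z hz => hf.differentiableAt (hU.mem_nhds hz)
  refine eq_of_fderiv_apply_sub_eq_zero_on_segment
    (fun z hz => (hdiff z (hUconv.segment_subset hx hy hz)).restrictScalars ℝ) fun z hz => ?_
  have hzU := hUconv.segment_subset hx hy hz
  rw [(hdiff z hzU).fderiv_restrictScalars ℝ]
  exact hxy z hzU

theorem ContinuousLinearMap.isClosed_biInf_ker {𝕜 E F ι : Type*} [Semiring 𝕜]
    [AddCommMonoid E] [TopologicalSpace E] [Module 𝕜 E]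
    [AddCommMonoid F] [TopologicalSpace F] [T1Space F] [Module 𝕜 F]
    (s : Set ι) (L : ι → E →L[𝕜] F) :
    IsClosed ((⨅ i ∈ s, LinearMap.ker (L i : E →ₗ[𝕜] F) : Submodule 𝕜 E) : Set E) := by
  simp only [Submodule.coe_iInf]
  exact isClosed_biInter fun i _ => (L i).isClosed_ker

theorem exists_apply_add_eq_of_sub_mem {X Y : Type*} [AddCommGroup X] {U : Set X}
    (M : AddSubgroup X) {f : X → Y} (hf : ∀ x ∈ U, ∀ y ∈ U, y - x ∈ M → f y = f x) :
    ∃ g : X → Y, ∀ x ∈ U, ∀ m ∈ M, g (x + m) = f x := by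
  classical
  refine ⟨fun z => if h : ∃ x ∈ U, z - x ∈ M then f h.choose else f z, fun x hx m hm => ?_⟩
  have hex : ∃ x' ∈ U, x + m - x' ∈ M := ⟨x, hx, by simpa using hm⟩
  obtain ⟨hx', hm'⟩ := hex.choose_spec
  simp only [dif_pos hex]
  refine hf x hx _ hx' ?_
  convert M.sub_mem hm hm' using 1
  abel

theorem differentiableOn_add_of_apply_add_eq {𝕜 X Y : Type*} [NontriviallyNormedField 𝕜]
    [NormedAddCommGroup X] [NormedSpace 𝕜 X] [NormedAddCommGroup Y] [NormedSpace 𝕜 Y]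
    {U M : Set X} {f g : X → Y} (hU : IsOpen U) (hf : DifferentiableOn 𝕜 f U)
    (hg : ∀ x ∈ U, ∀ m ∈ M, g (x + m) = f x) : DifferentiableOn 𝕜 g (U + M) := by
  rintro _ ⟨x, hx, m, hm, rfl⟩
  have hxU : x + m - m ∈ U := by simpa using hx
  have hnear : ∀ᶠ y in 𝓝 (x + m), y - m ∈ U :=
    (continuous_sub_right m).continuousAt.preimage_mem_nhds (hU.mem_nhds hxU)
  have htranslate : (fun y => f (y - m)) =ᶠ[𝓝 (x + m)] g :=
    hnear.mono fun y hy => by simpa using (hg _ hy m hm).symm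
  have hdiff : DifferentiableAt 𝕜 (fun y => f (y - m)) (x + m) :=
    (hf.differentiableAt (hU.mem_nhds hxU)).comp (x + m) (differentiableAt_id.sub_const m)
  exact (htranslate.differentiableAt_iff.1 hdiff).differentiableWithinAt

theorem Differentiable.eq_const_of_eventuallyEq {F : Type*} [NormedAddCommGroup F]
    [NormedSpace ℂ F] {ψ : ℂ → F} (hψ : Differentiable ℂ ψ) {z₀ : ℂ} {c : F}
    (h : ψ =ᶠ[𝓝 z₀] fun _ => c) : ψ = fun _ => c := by
  -- pass to the completion, where entire functions are analytic
  set e : F →L[ℂ] UniformSpace.Completion F := UniformSpace.Completion.toComplL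
  have he : e ∘ ψ = fun _ => e c :=
    (Complex.analyticOnNhd_univ_iff_differentiable.2 (e.differentiable.comp hψ)).eq_of_eventuallyEq
      analyticOnNhd_const (h.fun_comp e)
  funext z
  exact UniformSpace.Completion.coe_injective F (congr_fun he z)

theorem apply_add_eq_of_sub_mem {X Y : Type*} [NormedAddCommGroup X] [NormedSpace ℂ X]
    [NormedAddCommGroup Y] [NormedSpace ℂ Y] {U : Set X} {M : Submodule ℂ X} {g : X → Y}
    (hU : IsOpen U) (hg : DifferentiableOn ℂ g (U + (M : Set X)))
    (hinv : ∀ x ∈ U, ∀ y ∈ U, y - x ∈ M → g y = g x) {x m : X} (hx : x ∈ U) (hm : m ∈ M) :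
    g (x + m) = g x := by
  have hline : Continuous fun τ : ℂ => x + τ • m := by fun_prop
  have hψ : Differentiable ℂ fun τ : ℂ => g (x + τ • m) := fun τ =>
    (hg.differentiableAt (hU.add_right.mem_nhds (add_mem_add hx (M.smul_mem τ hm)))).comp τ
      (by fun_prop)
  have hnear : ∀ᶠ τ in 𝓝 (0 : ℂ), x + τ • m ∈ U :=
    hline.continuousAt.preimage_mem_nhds (by simpa using hU.mem_nhds hx)
  have hconst := hψ.eq_const_of_eventuallyEq (c := g x) <|
    hnear.mono fun τ hτ => hinv x hx _ hτ (by simpa using M.smul_mem τ hm)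
  simpa using congr_fun hconst 1

theorem holomorphic_quotient_extension_general {X Y : Type*}
    [NormedAddCommGroup X] [NormedSpace ℂ X]
    [NormedAddCommGroup Y] [NormedSpace ℂ Y]
    (U : Set X) (hU : IsOpen U) (hUconv : Convex ℝ U)
    (f : X → Y) (hf : DifferentiableOn ℂ f U)
    (M : Submodule ℂ X)
    (hM : M = ⨅ x ∈ U, LinearMap.ker (fderiv ℂ f x : X →ₗ[ℂ] Y)) :
    IsClosed (M : Set X) ∧
    ∃ g : X → Y,
      DifferentiableOn ℂ g (U + (M : Set X)) ∧
      (∀ x ∈ U, ∀ m ∈ M, g (x + m) = f x) ∧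
      ∀ g' : X → Y, DifferentiableOn ℂ g' (U + (M : Set X)) → Set.EqOn g' f U →
        Set.EqOn g g' (U + (M : Set X)) := by
  have hmem : ∀ m, m ∈ M ↔ ∀ z ∈ U, fderiv ℂ f z m = 0 := by
    simp [hM, Submodule.mem_iInf]
  have hinv : ∀ x ∈ U, ∀ y ∈ U, y - x ∈ M → f y = f x := fun x hx y hy hxy =>
    hUconv.apply_eq_of_fderiv_apply_sub_eq_zero hU hf hx hy ((hmem _).1 hxy)
  obtain ⟨g, hg⟩ := exists_apply_add_eq_of_sub_mem M.toAddSubgroup hinv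
  refine ⟨hM ▸ ContinuousLinearMap.isClosed_biInf_ker U (fderiv ℂ f),
    g, differentiableOn_add_of_apply_add_eq hU hf hg, hg, ?_⟩
  rintro g' hg' hg'f _ ⟨x, hx, m, hm, rfl⟩
  have hg'inv : ∀ x ∈ U, ∀ y ∈ U, y - x ∈ M → g' y = g' x := fun x hx y hy hxy => by
    rw [hg'f hx, hg'f hy, hinv x hx y hy hxy]
  rw [hg x hx m hm, apply_add_eq_of_sub_mem hU hg' hg'inv hx hm, hg'f hx]

/-- Let `U` be an open convex subset of a complex Banach space `X`,
`f : U → Y` holomorphic into a complex Banach space `Y`, and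
`M := ⋂_{x ∈ U} ker Df(x)`.  Then `M` is a closed subspace of `X`, and `f` extends
uniquely to a holomorphic function on `U + M` satisfying `f(x + m) = f(x)` for all
`x ∈ U`, `m ∈ M`. -/
theorem holomorphic_quotient_extension {X Y : Type*}
    [NormedAddCommGroup X] [NormedSpace ℂ X] [CompleteSpace X]
    [NormedAddCommGroup Y] [NormedSpace ℂ Y] [CompleteSpace Y]
    (U : Set X) (hU : IsOpen U) (hUconv : Convex ℝ U)
    (f : X → Y) (hf : DifferentiableOn ℂ f U)
    (M : Submodule ℂ X)
    (hM : M = ⨅ x ∈ U, LinearMap.ker (fderiv ℂ f x : X →ₗ[ℂ] Y)) :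
    IsClosed (M : Set X) ∧
    ∃ g : X → Y,
      DifferentiableOn ℂ g (U + (M : Set X)) ∧
      (∀ x ∈ U, ∀ m ∈ M, g (x + m) = f x) ∧
      ∀ g' : X → Y, DifferentiableOn ℂ g' (U + (M : Set X)) → Set.EqOn g' f U →
        Set.EqOn g g' (U + (M : Set X)) :=
  holomorphic_quotient_extension_general U hU hUconv f hf M hM
end

section
/- Let H be a self-adjoint operator on a Hilbert space with H ≥ 1 (i.e., ⟨ψ,Hψ⟩ ≥ ‖ψ‖² for ψ ∈ dom H). Let T be a symmetric operator with dom T ⊇ dom H such that |⟨φ, Tψ⟩| ≤ b‖φ‖‖Hψ‖ for all φ, ψ ∈ dom H, where b < 1. Then for every ψ ∈ dom H, |⟨ψ, Tψ⟩| ≤ b⟨ψ, Hψ⟩. -/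
/-!
Let `E(x, y) = ⟪H₀ x, y⟫` be the energy form on `dom H₀`. A self-adjoint `H₀ ≥ 1` is onto, so
`K = H₀⁻¹ T` is defined on `dom H₀`; it is symmetric for `E`, and the operator bound gives
`‖H₀ Kⁿ ψ‖ ≤ bⁿ ‖H₀ ψ‖`, hence `|E(ψ, Kⁿ ψ)| ≤ ‖H₀ ψ‖² bⁿ`. For an `E`-symmetric `K`,
Cauchy–Schwarz gives `|E(ψ, Kᵏ ψ)|² ≤ E(ψ, ψ) |E(ψ, K²ᵏ ψ)|`; iterating along `k = 2ⁿ` turns the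
growth rate `b` of the powers into `|⟪ψ, T ψ⟫| = |E(ψ, K ψ)| ≤ b E(ψ, ψ)`.
-/

open RCLike Filter LinearPMap
open scoped ComplexConjugate InnerProductSpace

theorem le_of_frequently_pow_le_mul_pow {x y D : ℝ} (hy : 0 ≤ y)
    (h : ∃ᶠ n in atTop, x ^ n ≤ D * y ^ n) : x ≤ y := by
  by_contra! hyx
  have hx : 0 < x := hy.trans_lt hyx
  have hsmall : ∀ᶠ n in atTop, D * (y / x) ^ n < 1 := by
    have := (tendsto_pow_atTop_nhds_zero_of_lt_one (div_nonneg hy hx.le)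
      ((div_lt_one hx).2 hyx)).const_mul D
    rw [mul_zero] at this
    exact this.eventually (eventually_lt_nhds one_pos)
  obtain ⟨n, hle, hlt⟩ := (h.and_eventually hsmall).exists
  rw [div_pow, mul_div_assoc', div_lt_one (pow_pos hx n)] at hlt
  exact hle.not_gt hlt

theorem pow_two_pow_le_of_sq_le {u : ℕ → ℝ} {A : ℝ} (hu : ∀ k, 0 ≤ u k)
    (h : ∀ k, u k ^ 2 ≤ A * u (2 * k)) (n : ℕ) :
    u 1 ^ 2 ^ n ≤ A ^ (2 ^ n - 1) * u (2 ^ n) := by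
  induction n with
  | zero => simp
  | succ n ih =>
    have hexp : 2 ^ (n + 1) - 1 = 2 * (2 ^ n - 1) + 1 := by
      have := Nat.one_le_two_pow (n := n); rw [pow_succ]; omega
    calc u 1 ^ 2 ^ (n + 1) = (u 1 ^ 2 ^ n) ^ 2 := by rw [pow_succ, pow_mul]
      _ ≤ (A ^ (2 ^ n - 1) * u (2 ^ n)) ^ 2 := by gcongr; exact pow_nonneg (hu 1) _
      _ = (A ^ (2 ^ n - 1)) ^ 2 * u (2 ^ n) ^ 2 := by ring
      _ ≤ (A ^ (2 ^ n - 1)) ^ 2 * (A * u (2 * 2 ^ n)) := by gcongr; exact h _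
      _ = A ^ (2 ^ (n + 1) - 1) * u (2 ^ (n + 1)) := by rw [hexp, pow_succ' 2 n]; ring

section SesquilinearForm

variable {𝕜 V : Type*} [RCLike 𝕜] [AddCommGroup V] [Module 𝕜 V] {f : V →ₗ⋆[𝕜] V →ₗ[𝕜] 𝕜}

theorem LinearMap.apply_pow_left_eq_apply_pow_right {K : Module.End 𝕜 V}
    (hK : ∀ x y, f (K x) y = f x (K y)) (n : ℕ) (x y : V) :
    f ((K ^ n) x) y = f x ((K ^ n) y) := by
  induction n generalizing x with
  | zero => rfl
  | succ n ih =>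
    conv_lhs => rw [pow_succ, Module.End.mul_apply]
    rw [ih, hK, ← Module.End.mul_apply, ← pow_succ']

namespace LinearMap.IsSymm

theorem norm_apply_sq_le (hf : f.IsSymm) (hpos : ∀ x, 0 ≤ re (f x x)) (x y : V) :
    ‖f x y‖ ^ 2 ≤ re (f x x) * re (f y y) := by
  let _ : PreInnerProductSpace.Core 𝕜 V :=
    { inner x y := f x y
      conj_inner_symm x y := hf.eq y x
      re_inner_nonneg := hpos
      add_left x y z := by simp
      smul_left x y r := by simp }
  have : ‖f x y‖ * ‖f y x‖ ≤ re (f x x) * re (f y y) :=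
    InnerProductSpace.Core.inner_mul_inner_self_le x y
  rwa [← hf.eq x y, RCLike.norm_conj, ← sq] at this

theorem norm_apply_le_of_norm_apply_pow_le (hf : f.IsSymm) (hpos : ∀ x, 0 ≤ re (f x x))
    {K : Module.End 𝕜 V} (hK : ∀ x y, f (K x) y = f x (K y)) {x : V} {b C : ℝ} (hb : 0 ≤ b)
    (hpow : ∀ n, ‖f x ((K ^ n) x)‖ ≤ C * b ^ n) :
    ‖f x (K x)‖ ≤ b * re (f x x) := by
  set m : ℕ → ℝ := fun k ↦ ‖f x ((K ^ k) x)‖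
  set A := re (f x x)
  have hsq : ∀ k, m k ^ 2 ≤ A * m (2 * k) := fun k ↦
    calc m k ^ 2 ≤ A * re (f ((K ^ k) x) ((K ^ k) x)) := hf.norm_apply_sq_le hpos _ _
      _ = A * re (f x ((K ^ (2 * k)) x)) := by
        rw [apply_pow_left_eq_apply_pow_right hK, two_mul, pow_add, Module.End.mul_apply]
      _ ≤ A * m (2 * k) := mul_le_mul_of_nonneg_left (re_le_norm _) (hpos x)
  have hA : 0 ≤ A := hpos x
  rw [← pow_one K]
  change m 1 ≤ b * A
  rcases hA.eq_or_lt with hA0 | hApos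
  · have : m 1 ^ 2 ≤ 0 := by simpa [← hA0] using hsq 1
    rw [← hA0, mul_zero]
    nlinarith
  refine le_of_frequently_pow_le_mul_pow (D := C / A) (by positivity) ?_
  refine (tendsto_pow_atTop_atTop_of_one_lt (α := ℕ) one_lt_two).frequently
    (Frequently.of_forall fun n ↦ ?_)
  calc m 1 ^ 2 ^ n ≤ A ^ (2 ^ n - 1) * m (2 ^ n) :=
        pow_two_pow_le_of_sq_le (fun _ ↦ norm_nonneg _) hsq n
    _ ≤ A ^ (2 ^ n - 1) * (C * b ^ 2 ^ n) := by gcongr; exact hpow _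
    _ = C / A * (b * A) ^ 2 ^ n := by
        rw [mul_pow, ← pow_sub_one_mul (pow_ne_zero n two_ne_zero) A]
        field_simp

end LinearMap.IsSymm

end SesquilinearForm

section InnerProductSpace

variable {𝕜 E : Type*} [RCLike 𝕜] [NormedAddCommGroup E] [InnerProductSpace 𝕜 E]

theorem norm_le_norm_of_sq_norm_le_re_inner {x y : E} (h : ‖x‖ ^ 2 ≤ re ⟪x, y⟫_𝕜) :
    ‖x‖ ≤ ‖y‖ := by
  have := h.trans (re_inner_le_norm x y)
  nlinarith [norm_nonneg x, norm_nonneg y]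

theorem norm_le_of_forall_mem_dense_norm_inner_le {s : Set E} (hs : Dense s) {w : E} {c : ℝ}
    (hc : 0 ≤ c) (h : ∀ x ∈ s, ‖⟪x, w⟫_𝕜‖ ≤ c * ‖x‖) : ‖w‖ ≤ c := by
  have hclosed : IsClosed {x : E | ‖⟪x, w⟫_𝕜‖ ≤ c * ‖x‖} :=
    isClosed_le (by fun_prop) (by fun_prop)
  have hw : ‖⟪w, w⟫_𝕜‖ ≤ c * ‖w‖ := hclosed.closure_subset_iff.2 h (hs.closure_eq ▸ trivial)
  rw [inner_self_eq_norm_sq_to_K, norm_pow, RCLike.norm_ofReal, abs_norm] at hw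
  nlinarith [norm_nonneg w]

end InnerProductSpace

namespace LinearPMap

variable {𝕜 E : Type*} [RCLike 𝕜] [NormedAddCommGroup E] [InnerProductSpace 𝕜 E]
  {A : E →ₗ.[𝕜] E}

def energyForm (A : E →ₗ.[𝕜] E) : A.domain →ₗ⋆[𝕜] A.domain →ₗ[𝕜] 𝕜 :=
  ((innerₛₗ 𝕜).comp A.toFun).compl₂ A.domain.subtype

@[simp]
theorem energyForm_apply (x y : A.domain) : A.energyForm x y = ⟪A x, y⟫_𝕜 := rfl

theorem norm_energyForm_pow_apply_le (hbdd : ∀ x : A.domain, ‖(x : E)‖ ≤ ‖A x‖)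
    {K : Module.End 𝕜 A.domain} {b : ℝ} (hb : 0 ≤ b) (hK : ∀ x, ‖A (K x)‖ ≤ b * ‖A x‖)
    (x : A.domain) (n : ℕ) : ‖A.energyForm x ((K ^ n) x)‖ ≤ ‖A x‖ ^ 2 * b ^ n := by
  have hpow : ‖A ((K ^ n) x)‖ ≤ b ^ n * ‖A x‖ := by
    induction n with
    | zero => simp
    | succ n ih =>
      calc ‖A ((K ^ (n + 1)) x)‖ ≤ b * ‖A ((K ^ n) x)‖ := by
            rw [pow_succ', Module.End.mul_apply]; exact hK _
        _ ≤ b * (b ^ n * ‖A x‖) := by gcongr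
        _ = b ^ (n + 1) * ‖A x‖ := by ring
  calc ‖A.energyForm x ((K ^ n) x)‖ ≤ ‖A x‖ * ‖((K ^ n) x : E)‖ := norm_inner_le_norm _ _
    _ ≤ ‖A x‖ * (b ^ n * ‖A x‖) := by gcongr; exact (hbdd _).trans hpow
    _ = ‖A x‖ ^ 2 * b ^ n := by ring

end LinearPMap

namespace IsSelfAdjoint

variable {𝕜 E : Type*} [RCLike 𝕜] [NormedAddCommGroup E] [InnerProductSpace 𝕜 E]
  [CompleteSpace E] {A : E →ₗ.[𝕜] E}

theorem isFormalAdjoint (hA : IsSelfAdjoint A) : A.IsFormalAdjoint A := by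
  have := adjoint_isFormalAdjoint (T := A) hA.dense_domain
  rwa [isSelfAdjoint_def.mp hA] at this

theorem exists_mem_domain_of_inner_eq (hA : IsSelfAdjoint A) {x y : E}
    (h : ∀ φ : A.domain, ⟪y, φ⟫_𝕜 = ⟪x, A φ⟫_𝕜) : ∃ hx : x ∈ A.domain, A ⟨x, hx⟩ = y := by
  have hA' : A† = A := isSelfAdjoint_def.mp hA
  have hx : x ∈ A†.domain := mem_adjoint_domain_of_exists x ⟨y, h⟩
  refine ⟨hA' ▸ hx, ?_⟩
  rw [← adjoint_apply_eq hA.dense_domain ⟨x, hx⟩ h]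
  exact (le_of_eq hA'.symm).2 rfl

theorem isClosed_range_of_norm_le (hA : IsSelfAdjoint A)
    (hbdd : ∀ x : A.domain, ‖(x : E)‖ ≤ ‖A x‖) : IsClosed (LinearMap.range A.toFun : Set E) := by
  refine isClosed_of_closure_subset fun y hy ↦ ?_
  obtain ⟨u, hu, hlim⟩ := mem_closure_iff_seq_limit.1 hy
  choose φ hφ using hu
  have hcauchy : CauchySeq fun n ↦ (φ n : E) := by
    refine Metric.cauchySeq_iff.2 fun ε hε ↦ ?_
    refine (Metric.cauchySeq_iff.1 hlim.cauchySeq ε hε).imp fun N hN m hm n hn ↦ ?_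
    calc dist (φ m : E) (φ n) = ‖((φ m - φ n : A.domain) : E)‖ := dist_eq_norm _ _
      _ ≤ ‖A (φ m - φ n)‖ := hbdd _
      _ = dist (u m) (u n) := by rw [LinearPMap.map_sub, dist_eq_norm]; simp only [← hφ]; rfl
      _ < ε := hN m hm n hn
  obtain ⟨x, hx⟩ := cauchySeq_tendsto_of_complete hcauchy
  suffices ∀ ψ : A.domain, ⟪y, ψ⟫_𝕜 = ⟪x, A ψ⟫_𝕜 by
    obtain ⟨hxA, hAx⟩ := hA.exists_mem_domain_of_inner_eq this
    exact ⟨⟨x, hxA⟩, hAx⟩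
  intro ψ
  refine tendsto_nhds_unique (hlim.inner tendsto_const_nhds) ?_
  convert hx.inner (tendsto_const_nhds (x := (A ψ : E))) using 2 with n
  rw [← hφ, ← hA.isFormalAdjoint]
  rfl

theorem range_eq_top_of_norm_le (hA : IsSelfAdjoint A)
    (hbdd : ∀ x : A.domain, ‖(x : E)‖ ≤ ‖A x‖) : LinearMap.range A.toFun = ⊤ := by
  have hperp : (LinearMap.range A.toFun)ᗮ = ⊥ := by
    refine (Submodule.eq_bot_iff _).2 fun v hv ↦ ?_
    obtain ⟨hvA, hAv⟩ := hA.exists_mem_domain_of_inner_eq (x := v) (y := 0) fun φ ↦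
      (inner_zero_left _).trans ((Submodule.mem_orthogonal' _ v).1 hv _ ⟨φ, rfl⟩).symm
    simpa [hAv] using hbdd ⟨v, hvA⟩
  rw [← (hA.isClosed_range_of_norm_le hbdd).submodule_topologicalClosure_eq,
    ← Submodule.orthogonal_orthogonal_eq_closure, hperp, Submodule.bot_orthogonal_eq_top]

theorem energyForm_isSymm (hA : IsSelfAdjoint A) : A.energyForm.IsSymm :=
  ⟨fun x y ↦ by simp [hA.isFormalAdjoint y x]⟩

end IsSelfAdjoint

theorem relative_form_bound_of_operator_bound_general {H : Type*} [NormedAddCommGroup H]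
    [InnerProductSpace ℂ H] [CompleteSpace H]
    (H₀ T : H →ₗ.[ℂ] H)
    (hsa : IsSelfAdjoint H₀)
    (hge : ∀ ψ : H₀.domain, ‖(ψ : H)‖ ^ 2 ≤ (inner ℂ ((ψ : H)) (H₀ ψ) : ℂ).re)
    (hdom : H₀.domain ≤ T.domain)
    (hsymm : ∀ x y : T.domain, (inner ℂ ((x : H)) (T y) : ℂ) = inner ℂ (T x) ((y : H)))
    (b : ℝ)
    (hbound : ∀ φ ψ : H₀.domain,
      ‖(inner ℂ ((φ : H)) (T ⟨(ψ : H), hdom ψ.2⟩) : ℂ)‖ ≤ b * ‖(φ : H)‖ * ‖H₀ ψ‖) :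
    ∀ ψ : H₀.domain,
      ‖(inner ℂ ((ψ : H)) (T ⟨(ψ : H), hdom ψ.2⟩) : ℂ)‖ ≤
        b * (inner ℂ ((ψ : H)) (H₀ ψ) : ℂ).re := by
  intro ψ
  have hbdd (x : H₀.domain) : ‖(x : H)‖ ≤ ‖H₀ x‖ :=
    norm_le_norm_of_sq_norm_le_re_inner (𝕜 := ℂ) (hge x)
  rcases eq_or_ne ψ 0 with rfl | hψ
  · simp
  have hb : 0 ≤ b := by
    have hpos : 0 < ‖(ψ : H)‖ := norm_pos_iff.2 (by simpa using hψ)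
    have := (norm_nonneg _).trans (hbound ψ ψ)
    rw [mul_assoc] at this
    exact nonneg_of_mul_nonneg_left this (mul_pos hpos (hpos.trans_le (hbdd ψ)))
  obtain ⟨R, hR⟩ :=
    H₀.toFun.exists_rightInverse_of_surjective (hsa.range_eq_top_of_norm_le hbdd)
  set K : Module.End ℂ H₀.domain := R ∘ₗ T.toFun ∘ₗ Submodule.inclusion hdom
  have hK (x : H₀.domain) : H₀ (K x) = T ⟨x, hdom x.2⟩ := LinearMap.congr_fun hR _
  have hKsymm (x y : H₀.domain) : H₀.energyForm (K x) y = H₀.energyForm x (K y) := by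
    rw [energyForm_apply, energyForm_apply, hK, hsa.isFormalAdjoint x (K y), hK]
    exact (hsymm ⟨x, hdom x.2⟩ ⟨y, hdom y.2⟩).symm
  have hKbound (x : H₀.domain) : ‖H₀ (K x)‖ ≤ b * ‖H₀ x‖ := by
    rw [hK]
    exact norm_le_of_forall_mem_dense_norm_inner_le hsa.dense_domain (by positivity)
      fun φ hφ ↦ (hbound ⟨φ, hφ⟩ x).trans_eq (by ring)
  have hform := hsa.energyForm_isSymm.norm_apply_le_of_norm_apply_pow_le
    (fun x ↦ (sq_nonneg _).trans ((hge x).trans_eq (inner_re_symm (𝕜 := ℂ) _ _))) hKsymm hb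
    (norm_energyForm_pow_apply_le hbdd hb hKbound ψ)
  rwa [energyForm_apply, energyForm_apply, hsa.isFormalAdjoint, hK, inner_re_symm] at hform

/-- Let `H₀` be a self-adjoint operator on a complex Hilbert space with
`H₀ ≥ 1`, and `T` a symmetric operator with `dom T ⊇ dom H₀` such that
`|⟨φ, Tψ⟩| ≤ b ‖φ‖ ‖H₀ψ‖` for all `φ, ψ ∈ dom H₀`, where `b < 1`.  Then for every
`ψ ∈ dom H₀`, `|⟨ψ, Tψ⟩| ≤ b ⟨ψ, H₀ψ⟩`. -/
theorem relative_form_bound_of_operator_bound {H : Type*} [NormedAddCommGroup H]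
    [InnerProductSpace ℂ H] [CompleteSpace H]
    (H₀ T : H →ₗ.[ℂ] H)
    (hsa : IsSelfAdjoint H₀)
    (hge : ∀ ψ : H₀.domain, ‖(ψ : H)‖ ^ 2 ≤ (inner ℂ ((ψ : H)) (H₀ ψ) : ℂ).re)
    (hdom : H₀.domain ≤ T.domain)
    (hsymm : ∀ x y : T.domain, (inner ℂ ((x : H)) (T y) : ℂ) = inner ℂ (T x) ((y : H)))
    (b : ℝ) (hb : b < 1)
    (hbound : ∀ φ ψ : H₀.domain,
      ‖(inner ℂ ((φ : H)) (T ⟨(ψ : H), hdom ψ.2⟩) : ℂ)‖ ≤ b * ‖(φ : H)‖ * ‖H₀ ψ‖) :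
    ∀ ψ : H₀.domain,
      ‖(inner ℂ ((ψ : H)) (T ⟨(ψ : H), hdom ψ.2⟩) : ℂ)‖ ≤
        b * (inner ℂ ((ψ : H)) (H₀ ψ) : ℂ).re :=
  relative_form_bound_of_operator_bound_general H₀ T hsa hge hdom hsymm b hbound
end
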